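/- Let G be a graph on n vertices, let v be a vertex of G of degree at least 3, and let u_1, u_2, u_3 be three distinct neighbors of v. If the graph G' = G − {vu_1, vu_2, vu_3} obtained by deleting the three edges vu_1, vu_2, vu_3 admits an orientation that is ⌊2n/3⌋-quasi-oriented-antimagic, then G admits an orientation that is ⌊2n/3⌋-quasi-oriented-antimagic. (Consequently, a vertex of degree at least 3 is reducible for the property that a graph on n vertices admits an orientation that is ⌊2n/3⌋-quasi-oriented-antimagic.) -/

import Mathlib

/-- `D` is an orientation of the simple graph `G`: a directed graph
whose underlying undirected graph is `G`. -/
def IsOrientation {V : Type*} (G : SimpleGraph V) (D : V → V → Prop) : Prop :=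
  (∀ u w : V, G.Adj u w ↔ (D u w ∨ D w u)) ∧ (∀ u w : V, ¬(D u w ∧ D w u))

open Classical in
/-- The oriented vertex sum at `v`: the sum of the labels of edges oriented toward `v`
minus the sum of the labels of edges oriented away from `v`. -/
noncomputable def orientedSum {V : Type*} [Fintype V] (G : SimpleGraph V)
    (D : V → V → Prop) (f : Sym2 V → ℕ) (v : V) : ℤ :=
  ∑ w ∈ (G.neighborSet v).toFinite.toFinset,
    if D w v then (f s(v, w) : ℤ) else -(f s(v, w) : ℤ)

/-- `G` admits an orientation that is `k`-quasi-oriented-antimagic: there is an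
orientation `D` of `G` and an injective edge labeling into `{1, …, |E(G)| + k}`
such that the oriented vertex sums are pairwise distinct over all vertices of
degree at least `1`. -/
def HasQuasiOrientedAntimagicOrientation {V : Type*} [Fintype V]
    (G : SimpleGraph V) (k : ℕ) : Prop :=
  ∃ D : V → V → Prop, IsOrientation G D ∧
    ∃ f : Sym2 V → ℕ,
      (∀ e ∈ G.edgeSet, f e ∈ Finset.Icc 1 (Nat.card G.edgeSet + k)) ∧
      (∀ e₁ ∈ G.edgeSet, ∀ e₂ ∈ G.edgeSet, e₁ ≠ e₂ → f e₁ ≠ f e₂) ∧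
      (∀ u w : V, u ≠ w →
        1 ≤ Nat.card (G.neighborSet u) → 1 ≤ Nat.card (G.neighborSet w) →
        orientedSum G D f u ≠ orientedSum G D f w)

/-!
Put the three edges `vuᵢ` back, labelled by distinct labels among the at least `k + 3` labels of
`{1, …, |E(G)| + k}` left unused by `G'`, where `k = ⌊2n/3⌋`. A signed label `xᵢ` on `vuᵢ` (label
`|xᵢ|`, orientation given by the sign) adds `xᵢ` to the oriented sum at `v` and `-xᵢ` to the one
at `uᵢ`, so only the sums at `v, u₁, u₂, u₃` change, to `P v + x₁ + x₂ + x₃` and `P uᵢ - xᵢ`.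
Each `xᵢ` ranges over a set `Xᵢ` of at least `2(k + 3) - (n - 4)` signed labels keeping `P uᵢ - xᵢ`
away from the untouched sums, and all remaining requirements are linear in `(x₁, x₂, x₃)`.
A staircase in `X₁ × X₂ × X₃` (a lattice path moving one coordinate at a time) is a chain for the
product order, so every linear form with positive coefficients is injective on it: `x₁ + x₂ + x₃`
meets the at most `n - 4` untouched sums on at most `n - 4` of its roughly `|X₁| + |X₂| + |X₃|`
triples, and every other requirement fails on boundedly many. The choice `k = ⌊2n/3⌋` is what
makes this count work.
-/

open Finset SimpleGraph

/-- For signed labels `a, b` on two edges at `v` and their other endpoints with old sums `p, q`,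
`Clash (p - q) a b` says that the labels `|a|, |b|` or the new sums `p - a, q - b` coincide. -/
def Clash (c a b : ℤ) : Prop := a = b ∨ a = -b ∨ a - b = c

instance (c a b : ℤ) : Decidable (Clash c a b) := inferInstanceAs (Decidable (_ ∨ _ ∨ _))

lemma card_filter_clash_left_le (s : Finset ℤ) (c b : ℤ) : #(s.filter (Clash c · b)) ≤ 3 :=
  (card_le_card (t := {b, -b, b + c}) fun a ha => by
    have : Clash c a b := (mem_filter.1 ha).2
    simp only [Clash, mem_insert, mem_singleton] at this ⊢
    omega).trans card_le_three

lemma card_filter_clash_right_le (s : Finset ℤ) (c a : ℤ) : #(s.filter (Clash c a ·)) ≤ 3 :=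
  (card_le_card (t := {a, -a, a - c}) fun b hb => by
    have : Clash c a b := (mem_filter.1 hb).2
    simp only [Clash, mem_insert, mem_singleton] at this ⊢
    omega).trans card_le_three

lemma card_filter_mem_le_of_injOn {α β : Type*} [DecidableEq β] {f : α → β} {s : Finset α}
    (hf : Set.InjOn f s) (B : Finset β) : #(s.filter (f · ∈ B)) ≤ #B :=
  card_le_card_of_injOn f (fun _ ha => (mem_filter.1 ha).2) (hf.mono (filter_subset _ s))

lemma strictMono_linear {a b c : ℤ} (ha : 0 < a) (hb : 0 < b) (hc : 0 < c) :
    StrictMono fun t : ℤ × ℤ × ℤ => a * t.1 + b * t.2.1 + c * t.2.2 := by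
  rintro ⟨x, y, z⟩ ⟨x', y', z'⟩ h
  simp only [Prod.lt_iff, Prod.mk_le_mk] at h
  rcases h with ⟨h₁, h₂, h₃⟩ | ⟨h₁, (⟨h₂, h₃⟩ | ⟨h₂, h₃⟩)⟩ <;> dsimp only <;> nlinarith

lemma StrictMono.injOn_of_isChain {α β : Type*} [PartialOrder α] [Preorder β] {f : α → β}
    (hf : StrictMono f) {s : Set α} (hs : IsChain (· ≤ ·) s) : s.InjOn f := by
  intro a ha b hb hab
  by_contra hne
  rcases hs ha hb hne with h | h
  · exact (hf (h.lt_of_ne hne)).ne hab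
  · exact (hf (h.lt_of_ne (Ne.symm hne))).ne' hab

def staircase (X Y Z : Finset ℤ) (y₀ z₀ x₁ y₁ : ℤ) : Finset (ℤ × ℤ × ℤ) :=
  X.image (fun x => (x, y₀, z₀)) ∪ Y.image (fun y => (x₁, y, z₀)) ∪ Z.image (fun z => (x₁, y₁, z))

section Staircase

variable (X Y Z : Finset ℤ) (y₀ z₀ x₁ y₁ : ℤ)

lemma card_staircase : #X + #Y + #Z ≤ #(staircase X Y Z y₀ z₀ x₁ y₁) + 2 := by
  rw [staircase]
  set T₁ := X.image (fun x => (x, y₀, z₀))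
  set T₂ := Y.image (fun y => (x₁, y, z₀))
  set T₃ := Z.image (fun z => (x₁, y₁, z))
  have h₁ : #T₁ = #X := card_image_of_injective _ fun a b h => by simpa using h
  have h₂ : #T₂ = #Y := card_image_of_injective _ fun a b h => by simpa using h
  have h₃ : #T₃ = #Z := card_image_of_injective _ fun a b h => by simpa using h
  have h₁₂ : #(T₁ ∩ T₂) ≤ 1 := card_le_one.2 fun s hs t ht => by
    simp only [T₁, T₂, mem_inter, mem_image] at hs ht
    grind
  have h₁₂₃ : #((T₁ ∪ T₂) ∩ T₃) ≤ 1 := card_le_one.2 fun s hs t ht => by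
    simp only [T₁, T₂, T₃, mem_inter, mem_union, mem_image] at hs ht
    grind
  have := card_union_add_card_inter T₁ T₂
  have := card_union_add_card_inter (T₁ ∪ T₂) T₃
  omega

lemma isChain_staircase (hX : ∀ x ∈ X, x ≤ x₁) (hY : ∀ y ∈ Y, y₀ ≤ y ∧ y ≤ y₁)
    (hZ : ∀ z ∈ Z, z₀ ≤ z) (hy : y₀ ≤ y₁) :
    IsChain (· ≤ ·) (staircase X Y Z y₀ z₀ x₁ y₁ : Set (ℤ × ℤ × ℤ)) := by
  intro s hs t ht _
  simp only [staircase, coe_union, coe_image, Set.mem_union, Set.mem_image, mem_coe] at hs ht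
  rcases hs with (⟨x, hx, rfl⟩ | ⟨y, hy, rfl⟩) | ⟨z, hz, rfl⟩ <;>
  rcases ht with (⟨x', hx', rfl⟩ | ⟨y', hy', rfl⟩) | ⟨z', hz', rfl⟩ <;>
  simp only [Prod.mk_le_mk] <;> grind

variable {X Y Z y₀ z₀ x₁ y₁}

lemma staircase_subset (hx₁ : x₁ ∈ X) (hy₀ : y₀ ∈ Y) (hy₁ : y₁ ∈ Y) (hz₀ : z₀ ∈ Z) :
    staircase X Y Z y₀ z₀ x₁ y₁ ⊆ X ×ˢ Y ×ˢ Z := by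
  intro t ht
  simp only [staircase, mem_union, mem_image] at ht
  rcases ht with (⟨x, hx, rfl⟩ | ⟨y, hy, rfl⟩) | ⟨z, hz, rfl⟩ <;> simp [*]

/-- Clashes only occur on the first leg (against `y₀`) and on the last one (against `x₁`
or `y₁`). -/
lemma card_filter_clash_staircase_le (c₁₂ c₁₃ c₂₃ : ℤ) (hX : ∀ x ∈ X, ¬Clash c₁₃ x z₀)
    (hY : ∀ y ∈ Y, ¬Clash c₁₂ x₁ y ∧ ¬Clash c₂₃ y z₀) (hx₁ : x₁ ∈ X) (hy₀ : y₀ ∈ Y)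
    (hy₁ : y₁ ∈ Y) :
    #((staircase X Y Z y₀ z₀ x₁ y₁).filter fun t =>
      Clash c₁₂ t.1 t.2.1 ∨ Clash c₁₃ t.1 t.2.2 ∨ Clash c₂₃ t.2.1 t.2.2) ≤ 9 := by
  set C := (X.filter (Clash c₁₂ · y₀)).image (fun x => (x, y₀, z₀)) ∪
    (Z.filter (Clash c₁₃ x₁ ·)).image (fun z => (x₁, y₁, z)) ∪
    (Z.filter (Clash c₂₃ y₁ ·)).image (fun z => (x₁, y₁, z))
  have hC : #C ≤ 9 := by
    grw [card_union_le, card_union_le, card_image_le, card_image_le, card_image_le,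
      card_filter_clash_left_le, card_filter_clash_right_le, card_filter_clash_right_le]
  refine le_trans (card_le_card fun t ht => ?_) hC
  obtain ⟨ht, hclash⟩ := mem_filter.1 ht
  simp only [staircase, mem_union, mem_image] at ht
  rcases ht with (⟨x, hx, rfl⟩ | ⟨y, hy, rfl⟩) | ⟨z, hz, rfl⟩
  · have := hX x hx
    have := hY y₀ hy₀
    simp_all [C]
  · have := hX x₁ hx₁
    have := hY y hy
    simp_all
  · have := hY y₁ hy₁
    simp_all [C]

end Staircase

theorem exists_triple_avoiding (X Y Z B : Finset ℤ) (c₁₂ c₁₃ c₂₃ b₁ b₂ b₃ : ℤ)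
    (hX : 4 ≤ #X) (hY : 7 ≤ #Y) (hZ : Z.Nonempty) (hB : #B + 24 ≤ #X + #Y + #Z) :
    ∃ x ∈ X, ∃ y ∈ Y, ∃ z ∈ Z, ¬Clash c₁₂ x y ∧ ¬Clash c₁₃ x z ∧ ¬Clash c₂₃ y z ∧
      x + y + z ∉ B ∧ 2 * x + y + z ≠ b₁ ∧ x + 2 * y + z ≠ b₂ ∧ x + y + 2 * z ≠ b₃ := by
  obtain ⟨z₀, hz₀, hz₀_le⟩ := Z.exists_min_image id hZ
  set X' := X.filter fun x => ¬Clash c₁₃ x z₀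
  have hX' : #X ≤ #X' + 3 := by
    have hsub : X ⊆ X' ∪ X.filter (Clash c₁₃ · z₀) := fun x hx => by
      by_cases Clash c₁₃ x z₀ <;> simp [X', *]
    grw [card_le_card hsub, card_union_le, card_filter_clash_left_le]
  obtain ⟨x₁, hx₁, hx₁_ge⟩ := X'.exists_max_image id (card_pos.1 (by omega))
  set Y' := Y.filter fun y => ¬Clash c₁₂ x₁ y ∧ ¬Clash c₂₃ y z₀
  have hY' : #Y ≤ #Y' + 6 := by
    have hsub : Y ⊆ Y' ∪ Y.filter (Clash c₁₂ x₁ ·) ∪ Y.filter (Clash c₂₃ · z₀) := fun y hy => by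
      by_cases Clash c₁₂ x₁ y <;> by_cases Clash c₂₃ y z₀ <;> simp [Y', *]
    grw [card_le_card hsub, card_union_le, card_union_le, card_filter_clash_right_le,
      card_filter_clash_left_le]
  obtain ⟨y₀, hy₀, hy₀_le⟩ := Y'.exists_min_image id (card_pos.1 (by omega))
  obtain ⟨y₁, hy₁, hy₁_ge⟩ := Y'.exists_max_image id ⟨y₀, hy₀⟩
  have hcard := card_staircase X' Y' Z y₀ z₀ x₁ y₁
  have hchain := isChain_staircase X' Y' Z y₀ z₀ x₁ y₁ hx₁_ge
    (fun y hy => ⟨hy₀_le y hy, hy₁_ge y hy⟩) hz₀_le (hy₀_le y₁ hy₁)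
  have hinj {a b c : ℤ} (ha : 0 < a) (hb : 0 < b) (hc : 0 < c) :=
    (strictMono_linear ha hb hc).injOn_of_isChain hchain
  have hclash := card_filter_clash_staircase_le (X := X') (Y := Y') (Z := Z) c₁₂ c₁₃ c₂₃
    (fun x hx => (mem_filter.1 hx).2) (fun y hy => (mem_filter.1 hy).2) hx₁ hy₀ hy₁
  set T := staircase X' Y' Z y₀ z₀ x₁ y₁
  set bad := (T.filter fun t => Clash c₁₂ t.1 t.2.1 ∨ Clash c₁₃ t.1 t.2.2 ∨ Clash c₂₃ t.2.1 t.2.2) ∪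
    T.filter (fun t => t.1 + t.2.1 + t.2.2 ∈ B) ∪
    T.filter (fun t => 2 * t.1 + t.2.1 + t.2.2 ∈ ({b₁} : Finset ℤ)) ∪
    T.filter (fun t => t.1 + 2 * t.2.1 + t.2.2 ∈ ({b₂} : Finset ℤ)) ∪
    T.filter (fun t => t.1 + t.2.1 + 2 * t.2.2 ∈ ({b₃} : Finset ℤ))
  have hbad : #bad < #T := by
    have h₀ := card_filter_mem_le_of_injOn (hinj one_pos one_pos one_pos) B
    have h₁ := card_filter_mem_le_of_injOn (hinj two_pos one_pos one_pos) {b₁}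
    have h₂ := card_filter_mem_le_of_injOn (hinj one_pos two_pos one_pos) {b₂}
    have h₃ := card_filter_mem_le_of_injOn (hinj one_pos one_pos two_pos) {b₃}
    simp only [one_mul, card_singleton] at h₀ h₁ h₂ h₃
    grw [card_union_le, card_union_le, card_union_le, card_union_le, hclash, h₀, h₁, h₂, h₃]
    omega
  obtain ⟨⟨x, y, z⟩, ht, hgood⟩ := exists_mem_notMem_of_card_lt_card hbad
  have hmem := staircase_subset hx₁ hy₀ hy₁ hz₀ ht
  simp only [X', Y', mem_product, mem_filter] at hmem
  simp only [bad, mem_union, mem_filter, mem_singleton, ht, true_and, not_or] at hgood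
  exact ⟨x, hmem.1.1, y, hmem.2.1.1, z, hmem.2.2, by tauto⟩

def signed (A : Finset ℕ) : Finset ℤ := A.image (↑) ∪ A.image (fun a : ℕ => -(a : ℤ))

lemma mem_signed {A : Finset ℕ} {s : ℤ} : s ∈ signed A ↔ s.natAbs ∈ A := by
  simp only [signed, mem_union, mem_image]
  constructor
  · rintro (⟨a, ha, rfl⟩ | ⟨a, ha, rfl⟩) <;> simpa
  · intro h
    rcases Int.natAbs_eq s with hs | hs
    exacts [Or.inl ⟨_, h, hs.symm⟩, Or.inr ⟨_, h, hs.symm⟩]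

lemma card_signed {A : Finset ℕ} (hA : 0 ∉ A) : #(signed A) = 2 * #A := by
  rw [signed, card_union_of_disjoint, card_image_of_injective _ Nat.cast_injective,
    card_image_of_injective _ fun a b h => by simpa using h, two_mul]
  refine disjoint_left.2 fun s hs hs' => ?_
  obtain ⟨a, ha, rfl⟩ := mem_image.1 hs
  obtain ⟨b, hb, hba⟩ := mem_image.1 hs'
  have : a = 0 := by omega
  exact hA (this ▸ ha)

lemma card_le_card_filter_sub_notMem_add (S F : Finset ℤ) (p : ℤ) :
    #S ≤ #(S.filter (p - · ∉ F)) + #F := by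
  have hsub : S ⊆ S.filter (p - · ∉ F) ∪ S.filter (p - · ∈ F) := fun s hs => by
    by_cases p - s ∈ F <;> simp [*]
  grw [card_le_card hsub, card_union_le,
    card_filter_mem_le_of_injOn (sub_right_injective (b := p)).injOn F]

theorem exists_signed_triple (A : Finset ℕ) (hA : 0 ∉ A) (F : Finset ℤ) (p₀ p₁ p₂ p₃ : ℤ)
    (hcard : 4 * #F + 24 ≤ 6 * #A) :
    ∃ x y z : ℤ, (∀ t ∈ [x, y, z], t.natAbs ∈ A) ∧ ([x, y, z].map Int.natAbs).Nodup ∧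
      (∀ q ∈ [p₀ + x + y + z, p₁ - x, p₂ - y, p₃ - z], q ∉ F) ∧
      [p₀ + x + y + z, p₁ - x, p₂ - y, p₃ - z].Nodup := by
  have hS := card_signed hA
  have h₁ := card_le_card_filter_sub_notMem_add (signed A) F p₁
  have h₂ := card_le_card_filter_sub_notMem_add (signed A) F p₂
  have h₃ := card_le_card_filter_sub_notMem_add (signed A) F p₃
  have hB : #(F.image (· - p₀)) ≤ #F := card_image_le
  obtain ⟨x, hx, y, hy, z, hz, hxy, hxz, hyz, hsum, hx₀, hy₀, hz₀⟩ := exists_triple_avoiding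
    ((signed A).filter (p₁ - · ∉ F)) ((signed A).filter (p₂ - · ∉ F))
    ((signed A).filter (p₃ - · ∉ F)) (F.image (· - p₀)) (p₁ - p₂) (p₁ - p₃) (p₂ - p₃)
    (p₁ - p₀) (p₂ - p₀) (p₃ - p₀) (by omega) (by omega) (card_pos.1 (by omega)) (by omega)
  simp only [mem_filter, mem_signed] at hx hy hz
  simp only [Clash, not_or] at hxy hxz hyz
  simp only [mem_image, not_exists, not_and] at hsum
  refine ⟨x, y, z, ?_, ?_, ?_, ?_⟩
  · simp [hx.1, hy.1, hz.1]
  · simp [Int.natAbs_eq_natAbs_iff, *]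
  · simp only [List.mem_cons, List.not_mem_nil, or_false, forall_eq_or_imp, forall_eq]
    exact ⟨fun h => hsum _ h (by ring), hx.2, hy.2, hz.2⟩
  · simp only [List.nodup_cons, List.mem_cons, List.not_mem_nil, or_false, List.nodup_nil,
      not_false_eq_true, and_true]
    omega

lemma le_card_filter_notMem_add {L : Set ℕ} (hL : L.Finite) [DecidablePred (· ∈ L)] (N : ℕ) :
    N ≤ #((Icc 1 N).filter (· ∉ L)) + L.ncard := by
  have hsub : Icc 1 N ⊆ (Icc 1 N).filter (· ∉ L) ∪ (Icc 1 N).filter (· ∈ L) :=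
    fun n hn => by rw [mem_union, mem_filter, mem_filter]; tauto
  have hmem : #((Icc 1 N).filter (· ∈ L)) ≤ L.ncard := by
    rw [← Set.ncard_coe_finset]
    exact Set.ncard_le_ncard (fun n hn => (mem_filter.1 hn).2) hL
  calc N = #(Icc 1 N) := by simp
    _ ≤ _ := card_le_card hsub
    _ ≤ _ := card_union_le _ _
    _ ≤ _ := Nat.add_le_add_left hmem _

theorem exists_signed_labels {V : Type*} [Fintype V] {v u₁ u₂ u₃ : V}
    (h₁ : v ≠ u₁) (h₂ : v ≠ u₂) (h₁₂ : u₁ ≠ u₂) (P : V → ℤ) {L : Set ℕ} (hL : L.Finite)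
    {m k : ℕ} (hm : L.ncard + 3 ≤ m) (hk : 2 * Fintype.card V ≤ 3 * k + 2) :
    ∃ x y z : ℤ, (∀ t ∈ [x, y, z], t ≠ 0 ∧ t.natAbs ∈ Set.Icc 1 (m + k) \ L) ∧
      ([x, y, z].map Int.natAbs).Nodup ∧ [P v + x + y + z, P u₁ - x, P u₂ - y, P u₃ - z].Nodup ∧
      ∀ q ∈ [P v + x + y + z, P u₁ - x, P u₂ - y, P u₃ - z], ∀ w ∉ [v, u₁, u₂, u₃], q ≠ P w := by
  classical
  set A := (Icc 1 (m + k)).filter (· ∉ L)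
  set F := (univ.filter (· ∉ [v, u₁, u₂, u₃])).image P
  have hA : m + k ≤ #A + L.ncard := le_card_filter_notMem_add hL (m + k)
  have hF : #F + 3 ≤ Fintype.card V := by
    have h₃ : #({v, u₁, u₂} : Finset V) = 3 := card_eq_three.2 ⟨_, _, _, h₁, h₂, h₁₂, rfl⟩
    have := card_le_univ ({v, u₁, u₂} : Finset V)
    grw [card_image_le, card_le_card (t := univ \ {v, u₁, u₂}) fun w => by simp; tauto,
      card_univ_sdiff]
    omega
  obtain ⟨x, y, z, hxyz, hnodup, hold, hnew⟩ :=
    exists_signed_triple A (by simp [A]) F (P v) (P u₁) (P u₂) (P u₃) (by omega)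
  refine ⟨x, y, z, fun t ht => ?_, hnodup, hnew,
    fun q hq w hw h => hold q hq (h ▸ mem_image_of_mem P (by simpa using hw))⟩
  obtain ⟨htA, htL⟩ := mem_filter.1 (hxyz t ht)
  rw [Finset.mem_Icc] at htA
  exact ⟨by rintro rfl; simp at htA, htA, htL⟩

section LabelledOrientation

variable {V : Type*}

def IsLabelledOrientation (G : SimpleGraph V) (D : V → V → Prop) (f : Sym2 V → ℕ) (L : Set ℕ) :
    Prop :=
  IsOrientation G D ∧ Set.BijOn f G.edgeSet L

/-- The edge `ab` oriented towards `a` if `0 < s` and towards `b` if `s < 0`: labelled by `|s|`,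
it contributes `s` to the oriented sum at `a` and `-s` to the one at `b`. -/
def signedArc (a b : V) (s : ℤ) : V → V → Prop :=
  fun p q => (p = b ∧ q = a ∧ 0 < s) ∨ (p = a ∧ q = b ∧ s < 0)

def signedEdgeSum [DecidableEq V] (a b : V) (s : ℤ) (w : V) : ℤ :=
  if w = a then s else if w = b then -s else 0

lemma IsOrientation.adj {G : SimpleGraph V} {D : V → V → Prop} (hD : IsOrientation G D) {p q : V}
    (h : D p q) : G.Adj p q :=
  (hD.1 p q).2 (Or.inl h)

lemma IsLabelledOrientation.ncard_eq {G : SimpleGraph V} {D : V → V → Prop} {f : Sym2 V → ℕ}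
    {L : Set ℕ} (h : IsLabelledOrientation G D f L) : L.ncard = Nat.card G.edgeSet := by
  rw [← h.2.image_eq, h.2.injOn.ncard_image, Nat.card_coe_set_eq]

variable [Fintype V]

open Classical in
lemma orientedSum_eq_sum (G : SimpleGraph V) (D : V → V → Prop) (f : Sym2 V → ℕ) (v : V) :
    orientedSum G D f v =
      ∑ w, if G.Adj v w then (if D w v then (f s(v, w) : ℤ) else -(f s(v, w) : ℤ)) else 0 := by
  rw [orientedSum, ← sum_filter]
  congr 1
  ext w
  simp

lemma hasQuasiOrientedAntimagicOrientation_iff {G : SimpleGraph V} {k : ℕ} :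
    HasQuasiOrientedAntimagicOrientation G k ↔ ∃ D f L, IsLabelledOrientation G D f L ∧
      L ⊆ Set.Icc 1 (Nat.card G.edgeSet + k) ∧
      Set.InjOn (orientedSum G D f) {w | 1 ≤ Nat.card (G.neighborSet w)} := by
  constructor
  · rintro ⟨D, hD, f, hrange, hinj, hsums⟩
    refine ⟨D, f, f '' G.edgeSet, ⟨hD, Set.InjOn.bijOn_image fun e he e' he' h =>
      by_contra fun hne => hinj e he e' he' hne h⟩, ?_,
      fun p hp q hq h => by_contra fun hne => hsums p q hne hp hq h⟩
    rintro _ ⟨e, he, rfl⟩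
    simpa using hrange e he
  · rintro ⟨D, f, L, ⟨hD, hf⟩, hL, hinj⟩
    exact ⟨D, hD, f, fun e he => by simpa using hL (hf.mapsTo he),
      fun e he e' he' hne => mt (fun h => hf.injOn he he' h) hne,
      fun p q hpq hp hq => mt (fun h => hinj hp hq h) hpq⟩

lemma IsLabelledOrientation.sup {H₁ H₂ : SimpleGraph V} {D₁ D₂ : V → V → Prop}
    {f₁ f₂ : Sym2 V → ℕ} {L₁ L₂ : Set ℕ} (h₁ : IsLabelledOrientation H₁ D₁ f₁ L₁)
    (h₂ : IsLabelledOrientation H₂ D₂ f₂ L₂) (hH : Disjoint H₁ H₂) (hL : Disjoint L₁ L₂) :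
    ∃ f, IsLabelledOrientation (H₁ ⊔ H₂) (D₁ ⊔ D₂) f (L₁ ∪ L₂) ∧
      ∀ w, orientedSum (H₁ ⊔ H₂) (D₁ ⊔ D₂) f w =
        orientedSum H₁ D₁ f₁ w + orientedSum H₂ D₂ f₂ w := by
  classical
  have hadj := disjoint_left.1 hH
  have hE : Disjoint H₁.edgeSet H₂.edgeSet := disjoint_edgeSet.2 hH
  set f := H₁.edgeSet.piecewise f₁ f₂
  have hf₁ : Set.EqOn f f₁ H₁.edgeSet := Set.piecewise_eqOn _ _ _
  have hf₂ : Set.EqOn f f₂ H₂.edgeSet := (Set.piecewise_eqOn_compl _ _ _).mono hE.subset_compl_left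
  refine ⟨f, ⟨⟨fun p q => ?_, fun p q => ?_⟩, ?_⟩, fun w => ?_⟩
  · simp only [sup_adj, Pi.sup_apply, sup_Prop_eq, h₁.1.1, h₂.1.1]
    tauto
  · rintro ⟨hpq | hpq, hqp | hqp⟩
    · exact h₁.1.2 p q ⟨hpq, hqp⟩
    · exact hadj _ _ (h₁.1.adj hpq) (h₂.1.adj hqp).symm
    · exact hadj _ _ (h₁.1.adj hqp) (h₂.1.adj hpq).symm
    · exact h₂.1.2 p q ⟨hpq, hqp⟩
  · rw [edgeSet_sup]
    refine (h₁.2.congr hf₁.symm).union (h₂.2.congr hf₂.symm) ?_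
    refine (Set.injOn_union hE).2 ⟨(h₁.2.congr hf₁.symm).injOn, (h₂.2.congr hf₂.symm).injOn,
      fun e he e' he' hee' => hL.ne_of_mem ?_ ?_ hee'⟩
    · exact hf₁ he ▸ h₁.2.mapsTo he
    · exact hf₂ he' ▸ h₂.2.mapsTo he'
  · simp only [orientedSum_eq_sum, ← sum_add_distrib]
    refine sum_congr rfl fun x _ => ?_
    by_cases hx₁ : H₁.Adj w x
    · have hD : (D₁ ⊔ D₂) x w ↔ D₁ x w :=
        or_iff_left fun h => hadj _ _ hx₁ (h₂.1.adj h).symm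
      simp [hx₁, hadj _ _ hx₁, hD, hf₁ (show s(w, x) ∈ H₁.edgeSet from hx₁)]
    by_cases hx₂ : H₂.Adj w x
    · have hD : (D₁ ⊔ D₂) x w ↔ D₂ x w :=
        or_iff_right fun h => hx₁ (h₁.1.adj h).symm
      simp [hx₁, hx₂, hD, hf₂ (show s(w, x) ∈ H₂.edgeSet from hx₂)]
    · simp [hx₁, hx₂]

end LabelledOrientation

section Edge

variable {V : Type*} {a b : V}

lemma isLabelledOrientation_edge (hab : a ≠ b) {s : ℤ} (hs : s ≠ 0) :
    IsLabelledOrientation (edge a b) (signedArc a b s) (fun _ => s.natAbs) {s.natAbs} := by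
  refine ⟨⟨fun p q => ?_, fun p q => ?_⟩, ?_⟩
  · simp only [edge_adj, signedArc]
    rcases hs.lt_or_gt with hs | hs <;> grind
  · simp only [signedArc]
    grind
  · rw [edgeSet_edge_of_ne hab]
    exact Set.bijOn_singleton.2 rfl

variable [Fintype V] [DecidableEq V]

lemma orientedSum_edge (hab : a ≠ b) (s : ℤ) (w : V) :
    orientedSum (edge a b) (signedArc a b s) (fun _ => s.natAbs) w = signedEdgeSum a b s w := by
  rw [orientedSum_eq_sum, signedEdgeSum]
  split_ifs with hwa hwb
  · subst hwa
    rw [sum_eq_single b]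
    · simp only [edge_adj, signedArc, hab, Int.natCast_natAbs]
      split_ifs <;> grind
    · simp [edge_adj]; tauto
    · simp
  · subst hwb
    rw [sum_eq_single a]
    · simp only [edge_adj, signedArc, hab, Int.natCast_natAbs]
      split_ifs <;> grind
    · simp [edge_adj]; tauto
    · simp
  · simp [edge_adj, hwa, hwb]

lemma IsLabelledOrientation.sup_edge {H : SimpleGraph V} {D : V → V → Prop} {f : Sym2 V → ℕ}
    {L : Set ℕ} (h : IsLabelledOrientation H D f L) (hab : a ≠ b) (hnadj : ¬H.Adj a b) {s : ℤ}
    (hs : s ≠ 0) (hsL : s.natAbs ∉ L) :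
    ∃ f', IsLabelledOrientation (H ⊔ edge a b) (D ⊔ signedArc a b s) f' (L ∪ {s.natAbs}) ∧
      ∀ w, orientedSum (H ⊔ edge a b) (D ⊔ signedArc a b s) f' w =
        orientedSum H D f w + signedEdgeSum a b s w := by
  obtain ⟨f', hf', hsum⟩ := h.sup (isLabelledOrientation_edge hab hs) ((disjoint_edge _).2 hnadj)
    (Set.disjoint_singleton_right.2 hsL)
  exact ⟨f', hf', fun w => by rw [hsum, orientedSum_edge hab]⟩

end Edge

section Star

variable {V : Type*} {G : SimpleGraph V} {v u₁ u₂ u₃ : V}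

lemma card_edgeSet_deleteEdges_star [Finite V] (h1 : G.Adj v u₁) (h2 : G.Adj v u₂)
    (h3 : G.Adj v u₃) (h12 : u₁ ≠ u₂) (h13 : u₁ ≠ u₃) (h23 : u₂ ≠ u₃) :
    Nat.card (G.deleteEdges {s(v, u₁), s(v, u₂), s(v, u₃)}).edgeSet + 3 = Nat.card G.edgeSet := by
  have h := Set.ncard_sdiff_add_ncard_of_subset (s := {s(v, u₁), s(v, u₂), s(v, u₃)})
    (t := G.edgeSet) (by simp [Set.insert_subset_iff, h1, h2, h3])
  rwa [Set.ncard_eq_three.2 ⟨_, _, _, by simp [h12, h1.ne'], by simp [h13, h1.ne'],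
    by simp [h23, h2.ne'], rfl⟩, ← edgeSet_deleteEdges, ← Nat.card_coe_set_eq,
    ← Nat.card_coe_set_eq] at h

lemma neighborSet_deleteEdges_star {w : V} (hw : w ∉ [v, u₁, u₂, u₃]) :
    (G.deleteEdges {s(v, u₁), s(v, u₂), s(v, u₃)}).neighborSet w = G.neighborSet w := by
  ext u
  simp only [List.mem_cons, List.not_mem_nil, or_false, not_or] at hw
  simp [hw]

variable [Fintype V] [DecidableEq V]

theorem exists_isLabelledOrientation_of_deleteEdges_star (h1 : G.Adj v u₁) (h2 : G.Adj v u₂)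
    (h3 : G.Adj v u₃) (h12 : u₁ ≠ u₂) (h13 : u₁ ≠ u₃) (h23 : u₂ ≠ u₃) {D : V → V → Prop}
    {f : Sym2 V → ℕ} {L S : Set ℕ}
    (h : IsLabelledOrientation (G.deleteEdges {s(v, u₁), s(v, u₂), s(v, u₃)}) D f L) (hLS : L ⊆ S)
    {x y z : ℤ} (hxyz : ∀ t ∈ [x, y, z], t ≠ 0 ∧ t.natAbs ∈ S \ L)
    (hnodup : ([x, y, z].map Int.natAbs).Nodup) :
    ∃ D' f' L', IsLabelledOrientation G D' f' L' ∧ L' ⊆ S ∧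
      ∀ w, orientedSum G D' f' w =
        orientedSum (G.deleteEdges {s(v, u₁), s(v, u₂), s(v, u₃)}) D f w +
          signedEdgeSum v u₁ x w + signedEdgeSum v u₂ y w + signedEdgeSum v u₃ z w := by
  simp only [List.mem_cons, List.not_mem_nil, or_false, forall_eq_or_imp, forall_eq] at hxyz
  simp only [List.map_cons, List.map_nil, List.nodup_cons, List.mem_cons, List.not_mem_nil,
    or_false, not_or] at hnodup
  obtain ⟨⟨hx, hxS, hxL⟩, ⟨hy, hyS, hyL⟩, hz, hzS, hzL⟩ := hxyz
  obtain ⟨⟨hxy, hxz⟩, hyz, -⟩ := hnodup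
  obtain ⟨f₁, h₁, hs₁⟩ := h.sup_edge h1.ne (by simp) hx hxL
  obtain ⟨f₂, h₂, hs₂⟩ := h₁.sup_edge h2.ne (by simp; grind) hy (by simp [hyL, Ne.symm hxy])
  obtain ⟨f₃, h₃, hs₃⟩ := h₂.sup_edge h3.ne (by simp; grind) hz
    (by simp [hzL, Ne.symm hxz, Ne.symm hyz])
  have hG : G.deleteEdges {s(v, u₁), s(v, u₂), s(v, u₃)} ⊔ edge v u₁ ⊔ edge v u₂ ⊔ edge v u₃ =
      G := by
    ext p q
    simp only [sup_adj, deleteEdges_adj, edge_adj, Set.mem_insert_iff, Set.mem_singleton_iff,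
      Sym2.eq_iff]
    grind [G.adj_symm, G.ne_of_adj]
  rw [hG] at h₃ hs₃
  exact ⟨_, f₃, _, h₃, by simp [Set.insert_subset_iff, hLS, hxS, hyS, hzS],
    fun w => by rw [hs₃, hs₂, hs₁]⟩

end Star

lemma Set.injOn_of_nodup_map_of_eqOn {α β : Type*} {S P : α → β} {O : Set α} {W : List α}
    (hP : Set.InjOn P {w ∈ O | w ∉ W}) (hSP : ∀ w ∉ W, S w = P w) (hW : (W.map S).Nodup)
    (hWP : ∀ w ∈ W, ∀ u ∉ W, S w ≠ P u) : Set.InjOn S O := by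
  intro p hp q hq hpq
  by_cases hpW : p ∈ W <;> by_cases hqW : q ∈ W
  · exact List.inj_on_of_nodup_map hW hpW hqW hpq
  · exact absurd (hpq.trans (hSP q hqW)) (hWP p hpW q hqW)
  · exact absurd (hpq.symm.trans (hSP p hpW)) (hWP q hqW p hpW)
  · exact hP ⟨hp, hpW⟩ ⟨hq, hqW⟩ (by rw [← hSP p hpW, ← hSP q hqW, hpq])

theorem statement_7_general {V : Type*} [Fintype V] (G : SimpleGraph V) (v u₁ u₂ u₃ : V)
    (h1 : G.Adj v u₁) (h2 : G.Adj v u₂) (h3 : G.Adj v u₃)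
    (h12 : u₁ ≠ u₂) (h13 : u₁ ≠ u₃) (h23 : u₂ ≠ u₃)
    (hG' : HasQuasiOrientedAntimagicOrientation
      (G.deleteEdges {s(v, u₁), s(v, u₂), s(v, u₃)}) ((2 * Fintype.card V) / 3)) :
    HasQuasiOrientedAntimagicOrientation G ((2 * Fintype.card V) / 3) := by
  classical
  set G' := G.deleteEdges {s(v, u₁), s(v, u₂), s(v, u₃)} with hG'_eq
  obtain ⟨D', f', L, hlab, hL, hinj⟩ := hasQuasiOrientedAntimagicOrientation_iff.1 hG'
  set P := orientedSum G' D' f' with hP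
  have hE : Nat.card G'.edgeSet + 3 = Nat.card G.edgeSet :=
    card_edgeSet_deleteEdges_star h1 h2 h3 h12 h13 h23
  obtain ⟨x, y, z, hxyz, hnodup, hnew, hold⟩ := exists_signed_labels h1.ne h2.ne h12 P
    ((Set.finite_Icc _ _).subset hL) (m := Nat.card G.edgeSet) (k := 2 * Fintype.card V / 3)
    (by rw [hlab.ncard_eq]; omega) (by omega)
  obtain ⟨D, f, L', hlab', hL', hsum⟩ := exists_isLabelledOrientation_of_deleteEdges_star
    h1 h2 h3 h12 h13 h23 hlab (hL.trans (Set.Icc_subset_Icc_right (by omega))) hxyz hnodup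
  rw [← hG'_eq, ← hP] at hsum
  have hout : ∀ w ∉ [v, u₁, u₂, u₃], orientedSum G D f w = P w := fun w hw => by
    simp only [List.mem_cons, List.not_mem_nil, or_false, not_or] at hw
    simp [hsum, signedEdgeSum, hw]
  have hmap : [v, u₁, u₂, u₃].map (orientedSum G D f) =
      [P v + x + y + z, P u₁ - x, P u₂ - y, P u₃ - z] := by
    simp [hsum, signedEdgeSum, h1.ne', h2.ne', h3.ne', h12, h13, h23, h12.symm, h13.symm,
      h23.symm, ← sub_eq_add_neg]
  refine hasQuasiOrientedAntimagicOrientation_iff.2 ⟨D, f, L', hlab', hL',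
    Set.injOn_of_nodup_map_of_eqOn (P := P) ?_ hout (hmap ▸ hnew)
      fun w hw => hold _ (hmap ▸ List.mem_map_of_mem hw)⟩
  exact hinj.mono fun w ⟨hw, hwW⟩ => by
    simpa only [Set.mem_ofPred_eq, hG'_eq, neighborSet_deleteEdges_star hwW] using hw

/-- Reducibility of a vertex of degree at least `3`: if `v` has degree at least `3`
with distinct neighbors `u₁, u₂, u₃`, and the graph `G'` obtained from `G` by deleting
the three edges `vu₁, vu₂, vu₃` admits an orientation that is
`⌊2n/3⌋`-quasi-oriented-antimagic, then `G` admits such an orientation as well. -/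
theorem statement_7 {V : Type*} [Fintype V] (G : SimpleGraph V) (v u₁ u₂ u₃ : V)
    (hdeg : 3 ≤ Nat.card (G.neighborSet v))
    (h1 : G.Adj v u₁) (h2 : G.Adj v u₂) (h3 : G.Adj v u₃)
    (h12 : u₁ ≠ u₂) (h13 : u₁ ≠ u₃) (h23 : u₂ ≠ u₃)
    (hG' : HasQuasiOrientedAntimagicOrientation
      (G.deleteEdges {s(v, u₁), s(v, u₂), s(v, u₃)}) ((2 * Fintype.card V) / 3)) :
    HasQuasiOrientedAntimagicOrientation G ((2 * Fintype.card V) / 3) :=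
  statement_7_general G v u₁ u₂ u₃ h1 h2 h3 h12 h13 h23 hG'
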